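/- Let C ∈ ℝ^{n×m}, a ∈ ℝ^n, b ∈ ℝ^m, λ > 0, and let T* be a nonnegative matrix minimizing the ℓ2-penalized unbalanced optimal transport objective F_λ over all nonnegative matrices. Then for every pair (i, j) with λ·(a_i + b_j) < C_{i,j}, one has T*_{i,j} = 0; in other words, the support of any optimal plan is contained in {(i, j) : C_{i,j} ≤ λ·(a_i + b_j)}. -/

import Mathlib

open Finset

/-- The ℓ2-penalized unbalanced optimal transport objective. -/
noncomputable def FobjL2 {n m : ℕ} (C : Matrix (Fin n) (Fin m) ℝ)
    (a : Fin n → ℝ) (b : Fin m → ℝ) (lam : ℝ)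
    (T : Matrix (Fin n) (Fin m) ℝ) : ℝ :=
  (∑ i, ∑ j, C i j * T i j)
    + lam / 2 * ∑ i, ((∑ j, T i j) - a i) ^ 2
    + lam / 2 * ∑ j, ((∑ i, T i j) - b j) ^ 2

/-- Support certificate for ℓ2-penalized UOT: any optimal plan vanishes at every
entry `(i,j)` with `λ(a_i + b_j) < C_{i,j}`. -/
theorem l2_uot_support {n m : ℕ} (C : Matrix (Fin n) (Fin m) ℝ)
    (a : Fin n → ℝ) (b : Fin m → ℝ) (lam : ℝ) (hlam : 0 < lam)
    (Tstar : Matrix (Fin n) (Fin m) ℝ) (hTstar : ∀ i j, 0 ≤ Tstar i j)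
    (hmin : ∀ T : Matrix (Fin n) (Fin m) ℝ, (∀ i j, 0 ≤ T i j) →
        FobjL2 C a b lam Tstar ≤ FobjL2 C a b lam T) :
    ∀ i j, lam * (a i + b j) < C i j → Tstar i j = 0 := by
  intro i j hlt
  by_contra hne
  have ht : 0 < Tstar i j := lt_of_le_of_ne (hTstar i j) (Ne.symm hne)
  set t := Tstar i j with htdef
  set T : Matrix (Fin n) (Fin m) ℝ :=
    fun k l => Tstar k l - (if k = i then if l = j then t else 0 else 0) with hT
  have hTnn : ∀ k l, 0 ≤ T k l := by
    intro k l
    simp only [hT]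
    split_ifs with h1 h2
    · subst h1; subst h2; simp; exact htdef.le
    · simpa using hTstar k l
    · simpa using hTstar k l
  have key := hmin T hTnn
  have h1 : ∑ k, ∑ l, C k l * T k l = (∑ k, ∑ l, C k l * Tstar k l) - C i j * t := by
    simp only [hT, mul_sub, Finset.sum_sub_distrib]
    congr 1
    rw [Finset.sum_eq_single i]
    · rw [Finset.sum_eq_single j] <;> simp +contextual
    · intro k _ hk; simp [hk]
    · simp
  have h2 : ∀ k, ∑ l, T k l = (∑ l, Tstar k l) - (if k = i then t else 0) := by
    intro k
    simp only [hT, Finset.sum_sub_distrib]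
    congr 1
    split_ifs with h <;> simp
  have h3 : ∀ l, ∑ k, T k l = (∑ k, Tstar k l) - (if l = j then t else 0) := by
    intro l
    simp only [hT, Finset.sum_sub_distrib]
    congr 1
    rw [Finset.sum_eq_single i] <;> simp +contextual
  have h4 : ∑ k, ((∑ l, T k l) - a k) ^ 2
      = (∑ k, ((∑ l, Tstar k l) - a k) ^ 2)
        - 2 * t * ((∑ l, Tstar i l) - a i) + t ^ 2 := by
    simp only [h2]
    have : ∀ k : Fin n, ((∑ l, Tstar k l) - (if k = i then t else 0) - a k) ^ 2
        = ((∑ l, Tstar k l) - a k) ^ 2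
          - 2 * (((∑ l, Tstar k l) - a k) * (if k = i then t else 0))
          + (if k = i then t ^ 2 else 0) := by
      intro k; split_ifs <;> ring
    rw [Finset.sum_congr rfl (fun k _ => this k)]
    rw [Finset.sum_add_distrib, Finset.sum_sub_distrib]
    simp only [mul_ite, mul_zero, Finset.sum_ite_eq', Finset.mem_univ, if_true]
    ring
  have h5 : ∑ l, ((∑ k, T k l) - b l) ^ 2
      = (∑ l, ((∑ k, Tstar k l) - b l) ^ 2)
        - 2 * t * ((∑ k, Tstar k j) - b j) + t ^ 2 := by
    simp only [h3]
    have : ∀ l : Fin m, ((∑ k, Tstar k l) - (if l = j then t else 0) - b l) ^ 2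
        = ((∑ k, Tstar k l) - b l) ^ 2
          - 2 * (((∑ k, Tstar k l) - b l) * (if l = j then t else 0))
          + (if l = j then t ^ 2 else 0) := by
      intro l; split_ifs <;> ring
    rw [Finset.sum_congr rfl (fun l _ => this l)]
    rw [Finset.sum_add_distrib, Finset.sum_sub_distrib]
    simp only [mul_ite, mul_zero, Finset.sum_ite_eq', Finset.mem_univ, if_true]
    ring
  have hr : t ≤ ∑ l, Tstar i l :=
    Finset.single_le_sum (fun l _ => hTstar i l) (Finset.mem_univ j)
  have hc : t ≤ ∑ k, Tstar k j :=
    Finset.single_le_sum (fun k _ => hTstar k j) (Finset.mem_univ i)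
  unfold FobjL2 at key
  rw [h1, h4, h5] at key
  nlinarith [mul_pos hlam ht, sq_nonneg t]
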